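/- arXiv:2304.01278 — 3 statements merged into one kernel-verified Lean document; each statement's English description precedes it below -/
import Mathlib

section
/- For every nondeterministic Büchi automaton A over a finite alphabet Σ there exists a deterministic Büchi automaton D over Σ such that J(A) = J(D). -/
open scoped Classical

/-- A (nondeterministic) Büchi automaton over alphabet `A`, with a finite state set. -/
structure BuchiAutomaton (A : Type) : Type 1 where
  Q : Type
  fin : Fintype Q
  step : Q → A → Set Q
  init : Set Q
  accept : Set Q

attribute [instance] BuchiAutomaton.fin

/-- A run of the automaton on an infinite word. -/
def BuchiAutomaton.IsRun {A : Type} (M : BuchiAutomaton A) (w : ℕ → A) (ρ : ℕ → M.Q) : Prop :=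
  ρ 0 ∈ M.init ∧ ∀ i, ρ (i + 1) ∈ M.step (ρ i) (w i)

/-- The language of a Büchi automaton: words admitting a run visiting the accepting set
infinitely often. -/
def BuchiAutomaton.lang {A : Type} (M : BuchiAutomaton A) : Set (ℕ → A) :=
  {w | ∃ ρ, M.IsRun w ρ ∧ ∀ n, ∃ m, n ≤ m ∧ ρ m ∈ M.accept}

/-- A Büchi automaton is deterministic if it has a unique initial state and
every transition set is a singleton. -/
def BuchiAutomaton.Deterministic {A : Type} (M : BuchiAutomaton A) : Prop :=
  (∃ q, M.init = {q}) ∧ ∀ q a, ∃ p, M.step q a = {p}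

/-- Parikh image of an infinite word: number of occurrences of each letter (`⊤` if infinite). -/
noncomputable def parikhInf {A : Type} (w : ℕ → A) : A → ℕ∞ :=
  fun a => {i : ℕ | w i = a}.encard

/-- The jumping language of a Büchi automaton. -/
def JumpLang {A : Type} (M : BuchiAutomaton A) : Set (ℕ → A) :=
  {w | ∃ w', parikhInf w' = parikhInf w ∧ w' ∈ M.lang}

/-- Number of occurrences of letter `a` in the `i`-th window of size `k` of `w`. -/
noncomputable def winCount {A : Type} (w : ℕ → A) (k i : ℕ) (a : A) : ℕ :=
  {j : ℕ | k * i ≤ j ∧ j < k * i + k ∧ w j = a}.ncard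

/-- `w` and `w'` are `k`-window permutations of each other. -/
def KWinPerm {A : Type} (k : ℕ) (w w' : ℕ → A) : Prop :=
  ∀ i a, winCount w k i a = winCount w' k i a

/-- The `k`-window jumping language of a Büchi automaton. -/
def KWinLang {A : Type} (M : BuchiAutomaton A) (k : ℕ) : Set (ℕ → A) :=
  {w | ∃ w', KWinPerm k w' w ∧ w' ∈ M.lang}

/-- The `∃`-window jumping language of a Büchi automaton. -/
def EWinLang {A : Type} (M : BuchiAutomaton A) : Set (ℕ → A) :=
  {w | ∃ k, 1 ≤ k ∧ ∃ w', KWinPerm k w' w ∧ w' ∈ M.lang}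

/-- Linear subsets of `ℕ^A`. -/
def IsLinearSetNat {A : Type} (R : Set (A → ℕ)) : Prop :=
  ∃ (b : A → ℕ) (P : Finset (A → ℕ)),
    R = {v | ∃ c : (A → ℕ) → ℕ, v = b + ∑ p ∈ P, c p • p}

/-- Semilinear sets: finite unions of linear sets. -/
def IsSemilinearSetNat {A : Type} (R : Set (A → ℕ)) : Prop :=
  ∃ (n : ℕ) (f : Fin n → Set (A → ℕ)), (∀ i, IsLinearSetNat (f i)) ∧ R = ⋃ i, f i

/-- A mask: a vector over `{0,∞}` with at least one `∞` coordinate. -/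
def IsMask {A : Type} (m : A → ℕ∞) : Prop :=
  (∀ a, m a = 0 ∨ m a = ⊤) ∧ ∃ a, m a = ⊤

/-- Adding a mask to a vector of naturals. -/
def maskAdd {A : Type} (x : A → ℕ) (m : A → ℕ∞) : A → ℕ∞ :=
  fun a => (x a : ℕ∞) + m a

/-- Adding a mask to a set of vectors, `R + m`. -/
def maskAddSet {A : Type} (R : Set (A → ℕ)) (m : A → ℕ∞) : Set (A → ℕ∞) :=
  (fun x => maskAdd x m) '' R

/-- `𝕄^A`: extended-natural vectors with at least one `∞` coordinate. -/
def MVecs (A : Type) : Set (A → ℕ∞) := {v | ∃ a, v a = ⊤}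

/-- Masked semilinear set: a union `⋃_m (S_m + m)` over all masks `m`, with each `S_m`
semilinear. -/
def IsMaskedSemilinear {A : Type} (S : Set (A → ℕ∞)) : Prop :=
  ∃ F : (A → ℕ∞) → Set (A → ℕ),
    (∀ m, IsMask m → IsSemilinearSetNat (F m)) ∧
    S = ⋃ m ∈ {m' : A → ℕ∞ | IsMask m'}, maskAddSet (F m) m

/-- `R` is `m`-oblivious: membership only depends on the `m`-equivalence class. -/
def MOblivious {A : Type} (m : A → ℕ∞) (R : Set (A → ℕ)) : Prop :=
  ∀ u v : A → ℕ, maskAdd u m = maskAdd v m → (u ∈ R ↔ v ∈ R)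

/-- `E_m`: unit vectors at the `∞` coordinates of the mask `m`. -/
noncomputable def maskUnits {A : Type} [Fintype A] [DecidableEq A] (m : A → ℕ∞) :
    Finset (A → ℕ) :=
  (Finset.univ.filter (fun a => m a = ⊤)).image (fun a => Pi.single a 1)

/-- `R` is in canonical `m`-oblivious form. -/
def CanonicalOblivious {A : Type} [Fintype A] [DecidableEq A] (m : A → ℕ∞)
    (R : Set (A → ℕ)) : Prop :=
  ∃ (n : ℕ) (b : Fin n → (A → ℕ)) (P : Fin n → Finset (A → ℕ)),
    (∀ i a, m a = ⊤ → b i a = 0) ∧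
    (∀ i p, p ∈ P i → ∀ a, m a = ⊤ → p a = 0) ∧
    R = ⋃ i, {v | ∃ c : (A → ℕ) → ℕ, v = b i + ∑ p ∈ (P i ∪ maskUnits m), c p • p}

/-!
The jumping language of `M` is determined by the set of Parikh images of the words in `L(M)`.
Cutting an accepting run between two visits of an accepting state `q`, after the last occurrence of
every letter that occurs finitely often, shows that this set consists of the vectors
`lassoParikh u B`, where `u` leads to `q` and `B` is the letter set of a cycle `v` through `q`:
the letter counts of `u` outside `B` and `⊤` on `B`. Conversely the lasso `u v^ω`
realises each of them.

For each such pair `(q, B)` a deterministic automaton reads a prefix over the complement of `B` with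
a subset construction in which the letters of `B` are silent, so that it knows which states are
reachable by words with the given counts outside `B`, and then commits to the period `B.toList`
repeated forever. The product of these finitely many automata, accepting when one of them does,
has the same set of Parikh images as `M`.
-/

open Filter

namespace Stream'

theorem get_cycle {α : Type*} (v : List α) (hv : v ≠ []) (i : ℕ) :
    (cycle v hv).get i = v[i % v.length]'(Nat.mod_lt _ (List.length_pos_iff.2 hv)) := by
  have hblock : ∀ m j (hj : j < v.length), (cycle v hv).get (m * v.length + j) = v[j] := by
    intro m j hj
    induction m with
    | zero => rw [cycle_eq, zero_mul, zero_add, get_append_left]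
    | succ m ih =>
      rw [cycle_eq, add_mul, one_mul, add_comm _ v.length, add_assoc, get_append_right, ih]
  conv_lhs => rw [← Nat.div_add_mod i v.length, mul_comm]
  exact hblock _ _ _

end Stream'

namespace NFA

variable {α σ : Type*} (N : NFA α σ)

theorem stepSet_mono {S T : Set σ} (h : S ⊆ T) (a : α) : N.stepSet S a ⊆ N.stepSet T a :=
  fun _ hp =>
    let ⟨r, hr, hp⟩ := N.mem_stepSet.1 hp
    N.mem_stepSet.2 ⟨r, h hr, hp⟩

variable {N}

theorem mem_evalFrom_singleton_cons_iff {p q : σ} {a : α} {u : List α} :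
    q ∈ N.evalFrom {p} (a :: u) ↔ ∃ p' ∈ N.step p a, q ∈ N.evalFrom {p'} u := by
  rw [evalFrom_cons, stepSet_singleton, mem_evalFrom_iff_exists]

theorem mem_evalFrom_map_range {w : ℕ → α} {ρ : ℕ → σ}
    (hρ : ∀ t, ρ (t + 1) ∈ N.step (ρ t) (w t)) (n : ℕ) :
    ρ n ∈ N.evalFrom {ρ 0} ((List.range n).map w) := by
  induction n with
  | zero => rfl
  | succ n ih =>
    rw [List.range_succ, List.map_append, evalFrom_append, List.map_singleton, evalFrom_singleton]
    exact N.mem_stepSet.2 ⟨_, ih, hρ n⟩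

theorem exists_path {p q : σ} {u : List α} (h : q ∈ N.evalFrom {p} u) :
    ∃ f : ℕ → σ, f 0 = p ∧ f u.length = q ∧
      ∀ t (ht : t < u.length), f (t + 1) ∈ N.step (f t) u[t] := by
  induction u generalizing p with
  | nil =>
    exact ⟨fun _ => p, rfl, (Set.mem_singleton_iff.1 h).symm,
      fun t ht => absurd ht (Nat.not_lt_zero t)⟩
  | cons a u ih =>
    obtain ⟨p', hp', hq⟩ := mem_evalFrom_singleton_cons_iff.1 h
    obtain ⟨f, hf0, hfq, hf⟩ := ih hq
    refine ⟨Stream'.cons p f, rfl, hfq, fun t ht => ?_⟩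
    cases t with
    | zero =>
      show f 0 ∈ N.step p a
      rwa [hf0]
    | succ t => exact hf t (by simpa using ht)

theorem exists_run_cycle {q : σ} {v : List α} (hv : v ≠ []) (h : q ∈ N.evalFrom {q} v) :
    ∃ g : ℕ → σ, (∀ t, g (t + 1) ∈ N.step (g t) (Stream'.cycle v hv t)) ∧
      ∀ n, g (n * v.length) = q := by
  obtain ⟨f, hf0, hfq, hf⟩ := exists_path h
  have hlen : 0 < v.length := List.length_pos_iff.2 hv
  refine ⟨fun t => f (t % v.length), fun t => ?_, fun n => by simp [hf0]⟩
  have hstep := hf (t % v.length) (Nat.mod_lt t hlen)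
  change f ((t + 1) % v.length) ∈ N.step _ ((Stream'.cycle v hv).get t)
  rw [Stream'.get_cycle, ← Nat.mod_add_mod]
  rcases Nat.lt_or_eq_of_le (Nat.mod_lt t hlen) with hlt | heq
  · rwa [Nat.mod_eq_of_lt hlt]
  · -- the last step of a period lands in `f v.length = q = f 0`
    rw [Nat.succ_eq_add_one] at heq
    rw [heq] at hstep
    rwa [heq, Nat.mod_self, hf0, ← hfq]

theorem exists_run_append {p q : σ} {u : List α} (h : q ∈ N.evalFrom {p} u)
    {s : Stream' α} {g : ℕ → σ} (hg0 : g 0 = q)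
    (hg : ∀ t, g (t + 1) ∈ N.step (g t) (s t)) :
    ∃ ρ : ℕ → σ, ρ 0 = p ∧ (∀ t, ρ (t + 1) ∈ N.step (ρ t) ((u ++ₛ s) t)) ∧
      ∀ t, ρ (u.length + t) = g t := by
  induction u generalizing p with
  | nil => exact ⟨g, hg0.trans h, hg, fun t => by simp⟩
  | cons a u ih =>
    obtain ⟨p', hp', hq⟩ := mem_evalFrom_singleton_cons_iff.1 h
    obtain ⟨ρ, hρ0, hρ, hρg⟩ := ih hq
    refine ⟨Stream'.cons p ρ, rfl, fun t => ?_, fun t => ?_⟩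
    · cases t with
      | zero =>
        show ρ 0 ∈ N.step p a
        rwa [hρ0]
      | succ t => exact hρ t
    · rw [List.length_cons, add_right_comm]
      exact hρg t

end NFA

variable {A : Type}

theorem parikhInf_eq_top_iff {w : ℕ → A} {a : A} :
    parikhInf w a = ⊤ ↔ ∃ᶠ i in atTop, w i = a := by
  rw [parikhInf, Set.encard_eq_top_iff, Nat.frequently_atTop_iff_infinite]

theorem eventually_parikhInf_apply_eq_top [Finite A] (w : ℕ → A) :
    ∀ᶠ i in atTop, parikhInf w (w i) = ⊤ := by
  have hfinite : ∀ a, ∀ᶠ i in atTop, parikhInf w a ≠ ⊤ → w i ≠ a := fun a => by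
    by_cases ha : parikhInf w a = ⊤
    · exact .of_forall fun _ h => (h ha).elim
    · exact (not_frequently.1 (mt parikhInf_eq_top_iff.2 ha)).mono fun _ h _ => h
  exact (eventually_all.2 hfinite).mono fun i h => not_not.1 fun hne => h (w i) hne rfl

theorem parikhInf_eq_count_map_range {w : ℕ → A} {a : A} {n : ℕ}
    (h : ∀ i ≥ n, w i ≠ a) :
    parikhInf w a = ((List.range n).map w).count a := by
  have hocc : {i | w i = a} = ↑((Finset.range n).filter fun i => a = w i) := by
    ext i
    simp only [Set.mem_ofPred_eq, Finset.coe_filter, Finset.mem_range]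
    exact ⟨fun hi => ⟨not_le.1 fun hn => h i hn hi, hi.symm⟩, fun hi => hi.2.symm⟩
  rw [parikhInf, hocc, Set.encard_coe_eq_coe_finsetCard, ← Multiset.coe_count,
    ← Multiset.map_coe, Multiset.count_map]
  rfl

noncomputable def lassoParikh (u : List A) (B : Finset A) : A → ℕ∞ :=
  fun a => if a ∈ B then ⊤ else u.count a

theorem lassoParikh_congr {u u' : List A} {B : Finset A} (h : ∀ a ∉ B, u.count a = u'.count a) :
    lassoParikh u B = lassoParikh u' B := by
  funext a
  unfold lassoParikh
  split_ifs with ha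
  · rfl
  · rw [h a ha]

theorem parikhInf_of_periodic {w : ℕ → A} {n : ℕ} {v : List A} (hv : v ≠ [])
    (h : ∀ j, w (n + j) = v[j % v.length]'(Nat.mod_lt _ (List.length_pos_iff.2 hv))) :
    parikhInf w = lassoParikh ((List.range n).map w) v.toFinset := by
  funext a
  unfold lassoParikh
  split_ifs with ha
  · obtain ⟨j, hj, rfl⟩ := List.mem_iff_getElem.1 (List.mem_toFinset.1 ha)
    refine parikhInf_eq_top_iff.2 (frequently_atTop.2 fun N => ⟨n + (N * v.length + j), ?_, ?_⟩)
    · nlinarith [List.length_pos_iff.2 hv]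
    · simp [h, Nat.mod_eq_of_lt hj]
  · refine parikhInf_eq_count_map_range fun i hi hwi => ha ?_
    obtain ⟨j, rfl⟩ := Nat.exists_eq_add_of_le hi
    rw [List.mem_toFinset, ← hwi, h]
    exact List.getElem_mem _

theorem map_range_append_stream (u : List A) (s : Stream' A) :
    (List.range u.length).map (u ++ₛ s).get = u :=
  List.ext_getElem (by simp) fun i h _ => by
    simp only [List.getElem_map, List.getElem_range]
    exact Stream'.get_append_left i u s (by simpa using h)

theorem parikhInf_append_cycle (u v : List A) (hv : v ≠ []) :
    parikhInf (u ++ₛ Stream'.cycle v hv) = lassoParikh u v.toFinset := by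
  have := parikhInf_of_periodic (w := (u ++ₛ Stream'.cycle v hv).get) (n := u.length) hv fun j =>
    (Stream'.get_append_right j u _).trans (Stream'.get_cycle v hv j)
  rw [map_range_append_stream] at this
  exact this

structure DetBuchiAutomaton (A : Type) : Type 1 where
  Q : Type
  fin : Fintype Q
  init : Q
  step : Q → A → Q
  accept : Set Q

attribute [instance] DetBuchiAutomaton.fin

namespace DetBuchiAutomaton

variable (D : DetBuchiAutomaton A)

def run (w : ℕ → A) : ℕ → D.Q
  | 0 => D.init
  | t + 1 => D.step (run w t) (w t)

def lang : Set (ℕ → A) := {w | ∃ᶠ t in atTop, D.run w t ∈ D.accept}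

def toBuchi : BuchiAutomaton A where
  Q := D.Q
  fin := D.fin
  step q a := {D.step q a}
  init := {D.init}
  accept := D.accept

theorem toBuchi_deterministic : D.toBuchi.Deterministic :=
  ⟨⟨D.init, rfl⟩, fun q a => ⟨D.step q a, rfl⟩⟩

theorem isRun_toBuchi_iff {w : ℕ → A} {ρ : ℕ → D.Q} :
    D.toBuchi.IsRun w ρ ↔ ρ = D.run w := by
  constructor
  · rintro ⟨h0, hstep⟩
    funext t
    induction t with
    | zero => exact h0
    | succ t ih => rw [run, ← ih]; exact hstep t
  · rintro rfl
    exact ⟨rfl, fun _ => rfl⟩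

theorem toBuchi_lang : D.toBuchi.lang = D.lang := by
  ext w
  constructor
  · rintro ⟨ρ, hρ, hacc⟩
    obtain rfl := D.isRun_toBuchi_iff.1 hρ
    exact frequently_atTop.2 hacc
  · exact fun h => ⟨_, D.isRun_toBuchi_iff.2 rfl, frequently_atTop.1 h⟩

noncomputable def pi {ι : Type} [Fintype ι] (D : ι → DetBuchiAutomaton A) :
    DetBuchiAutomaton A where
  Q := ∀ i, (D i).Q
  fin := inferInstance
  init i := (D i).init
  step s a i := (D i).step (s i) a
  accept := {s | ∃ i, s i ∈ (D i).accept}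

theorem run_pi {ι : Type} [Fintype ι] (D : ι → DetBuchiAutomaton A) (w : ℕ → A) (t : ℕ) :
    (pi D).run w t = fun i => (D i).run w t := by
  induction t with
  | zero => rfl
  | succ t ih => funext i; simp only [run, ih]; rfl

theorem lang_pi {ι : Type} [Fintype ι] (D : ι → DetBuchiAutomaton A) :
    (pi D).lang = ⋃ i, (D i).lang := by
  ext w
  simp only [lang, Set.mem_iUnion, Set.mem_ofPred_eq, run_pi]
  exact frequently_exists

end DetBuchiAutomaton

namespace BuchiAutomaton

variable (M : BuchiAutomaton A)

def toNFA : NFA A M.Q := ⟨M.step, M.init, M.accept⟩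

def IsCycleAlphabet (q : M.Q) (B : Finset A) : Prop :=
  q ∈ M.accept ∧ ∃ v : List A, v ≠ [] ∧ v.toFinset = B ∧ q ∈ M.toNFA.evalFrom {q} v

variable {M}

theorem mem_lang_iff {w : ℕ → A} :
    w ∈ M.lang ↔ ∃ ρ, M.IsRun w ρ ∧ ∃ᶠ t in atTop, ρ t ∈ M.accept := by
  simp only [lang, frequently_atTop]
  rfl

theorem append_cycle_mem_lang {q : M.Q} {u v : List A} (hv : v ≠ []) (hq : q ∈ M.accept)
    (hu : q ∈ M.toNFA.eval u) (hcyc : q ∈ M.toNFA.evalFrom {q} v) :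
    u ++ₛ Stream'.cycle v hv ∈ M.lang := by
  obtain ⟨p, hp, hpq⟩ := NFA.mem_evalFrom_iff_exists.1 hu
  obtain ⟨g, hg, hgq⟩ := NFA.exists_run_cycle hv hcyc
  obtain ⟨ρ, hρ0, hρ, hρg⟩ := NFA.exists_run_append hpq (by simpa using hgq 0) hg
  refine mem_lang_iff.2 ⟨ρ, ⟨hρ0 ▸ hp, hρ⟩, frequently_atTop.2 fun N => ?_⟩
  refine ⟨u.length + N * v.length, ?_, by rw [hρg, hgq]; exact hq⟩
  nlinarith [List.length_pos_iff.2 hv]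

theorem exists_lasso_of_mem_lang [Fintype A] {w : ℕ → A} (hw : w ∈ M.lang) :
    ∃ q B u, M.IsCycleAlphabet q B ∧ q ∈ M.toNFA.eval u ∧
      parikhInf w = lassoParikh u B := by
  obtain ⟨ρ, ⟨hρ0, hρ⟩, hacc⟩ := mem_lang_iff.1 hw
  obtain ⟨q, hq⟩ : ∃ q, ∃ᶠ t in atTop, q ∈ M.accept ∧ ρ t = q :=
    frequently_exists.1 (hacc.mono fun t ht => ⟨ρ t, ht, rfl⟩)
  obtain ⟨N, hN⟩ := eventually_atTop.1 (eventually_parikhInf_apply_eq_top w)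
  obtain ⟨m₀, hm₀, hqacc, hqm₀⟩ := frequently_atTop.1 hq N
  set B := Finset.univ.filter fun a => parikhInf w a = ⊤ with hB
  have hcover : ∀ᶠ n in atTop, ∀ b ∈ B, ∃ i, m₀ ≤ i ∧ i < n ∧ w i = b := by
    refine (eventually_all_finset B).2 fun b hb => ?_
    obtain ⟨i, hi, hwi⟩ :=
      frequently_atTop.1 (parikhInf_eq_top_iff.1 (Finset.mem_filter.1 hb).2) m₀
    exact (eventually_gt_atTop i).mono fun n hn => ⟨i, hi, hn, hwi⟩
  obtain ⟨m₁, ⟨-, hqm₁⟩, hcov, hm₁⟩ :=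
    (hq.and_eventually (hcover.and (eventually_gt_atTop m₀))).exists
  obtain ⟨d, rfl⟩ := Nat.exists_eq_add_of_lt hm₁
  refine ⟨q, B, (List.range m₀).map w, ⟨hqacc, (List.range (d + 1)).map fun i => w (m₀ + i),
    by simp, ?_, ?_⟩, ?_, ?_⟩
  · ext a
    simp only [List.mem_toFinset, List.mem_map, List.mem_range]
    constructor
    · rintro ⟨i, -, rfl⟩
      simpa [hB] using hN (m₀ + i) (by omega)
    · intro ha
      obtain ⟨i, hi₀, hi₁, rfl⟩ := hcov a ha
      exact ⟨i - m₀, by omega, by rw [Nat.add_sub_cancel' hi₀]⟩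
  · have := NFA.mem_evalFrom_map_range (N := M.toNFA) (ρ := fun t => ρ (m₀ + t))
      (fun t => hρ (m₀ + t)) (d + 1)
    rwa [add_zero, hqm₀, ← add_assoc, hqm₁] at this
  · exact NFA.mem_evalFrom_iff_exists.2
      ⟨ρ 0, hρ0, hqm₀ ▸ NFA.mem_evalFrom_map_range (N := M.toNFA) hρ m₀⟩
  · funext a
    unfold lassoParikh
    split_ifs with ha
    · exact (Finset.mem_filter.1 ha).2
    · refine parikhInf_eq_count_map_range fun i hi hwi => ha ?_
      simpa [hB, hwi] using hN i (by omega)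

section SilentDFA

variable (M : BuchiAutomaton A) (q : M.Q) (B : Finset A)

def silentClosure (S : Set M.Q) : Set M.Q :=
  {p | ∃ x : List A, (∀ b ∈ x, b ∈ B) ∧ p ∈ M.toNFA.evalFrom S x}

/-- Subset construction in which the letters of `B` are silent: after reading a word `u'` over the
complement of `B`, it is in the set of states reachable by the words whose letter counts outside `B`
are those of `u'`. -/
def silentDFA : DFA A (Set M.Q) where
  step S a := M.silentClosure B (M.toNFA.stepSet S a)
  start := M.silentClosure B M.init
  accept := {S | q ∈ S}

variable {M q B}

theorem subset_silentClosure (S : Set M.Q) : S ⊆ M.silentClosure B S :=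
  fun _ hp => ⟨[], by simp, hp⟩

theorem stepSet_silentClosure_subset {S : Set M.Q} {b : A} (hb : b ∈ B) :
    M.toNFA.stepSet (M.silentClosure B S) b ⊆ M.silentClosure B S := by
  intro p hp
  obtain ⟨r, ⟨x, hx, hr⟩, hp⟩ := NFA.mem_stepSet.1 hp
  refine ⟨x ++ [b], fun c hc => ?_, ?_⟩
  · rcases List.mem_append.1 hc with hc | hc
    · exact hx c hc
    · exact List.mem_singleton.1 hc ▸ hb
  · rw [NFA.evalFrom_append, NFA.evalFrom_singleton]
    exact NFA.mem_stepSet.2 ⟨r, hr, hp⟩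

theorem exists_mem_evalFrom_of_mem_evalFrom_silentClosure {S : Set M.Q} {u : List A} {r : M.Q}
    (h : r ∈ M.toNFA.evalFrom (M.silentClosure B S) u) :
    ∃ x : List A, (∀ b ∈ x, b ∈ B) ∧ r ∈ M.toNFA.evalFrom S (x ++ u) := by
  obtain ⟨p, ⟨x, hx, hp⟩, hr⟩ := NFA.mem_evalFrom_iff_exists.1 h
  refine ⟨x, hx, ?_⟩
  rw [NFA.evalFrom_append]
  exact NFA.mem_evalFrom_iff_exists.2 ⟨p, hp, hr⟩

theorem mem_silentDFA_evalFrom_filter {S T : Set M.Q} (hT : T ⊆ M.silentClosure B S)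
    {u : List A} {r : M.Q} (hr : r ∈ M.toNFA.evalFrom T u) :
    r ∈ (M.silentDFA q B).evalFrom (M.silentClosure B S) (u.filter (· ∉ B)) := by
  induction u generalizing S T with
  | nil => exact hT hr
  | cons a u ih =>
    rw [NFA.evalFrom_cons] at hr
    by_cases ha : a ∈ B
    · rw [List.filter_cons_of_neg (by simpa using ha)]
      exact ih (fun p hp => stepSet_silentClosure_subset ha (NFA.stepSet_mono _ hT a hp)) hr
    · rw [List.filter_cons_of_pos (by simpa using ha), DFA.evalFrom_cons]
      exact ih (fun p hp => subset_silentClosure _ (NFA.stepSet_mono _ hT a hp)) hr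

theorem filter_mem_silentDFA_accepts {u : List A} (h : q ∈ M.toNFA.eval u) :
    u.filter (· ∉ B) ∈ (M.silentDFA q B).accepts :=
  mem_silentDFA_evalFrom_filter (subset_silentClosure _) h

theorem exists_mem_evalFrom_of_mem_silentDFA_evalFrom {S : Set M.Q} {u' : List A} {r : M.Q}
    (h : r ∈ (M.silentDFA q B).evalFrom (M.silentClosure B S) u') :
    ∃ u : List A, (∀ a ∉ B, u.count a = u'.count a) ∧ r ∈ M.toNFA.evalFrom S u := by
  induction u' generalizing S with
  | nil =>
    obtain ⟨x, hx, hr⟩ := h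
    exact ⟨x, fun a ha => by simpa using List.count_eq_zero.2 fun h => ha (hx a h), hr⟩
  | cons a u' ih =>
    obtain ⟨u, hu, hr⟩ := ih h
    obtain ⟨x, hx, hr⟩ := exists_mem_evalFrom_of_mem_evalFrom_silentClosure (u := a :: u) hr
    refine ⟨x ++ a :: u, fun c hc => ?_, hr⟩
    rw [List.count_append, List.count_eq_zero.2 fun h => hc (hx c h), zero_add,
      List.count_cons, List.count_cons, hu c hc]

theorem exists_count_eq_of_mem_silentDFA_accepts {u' : List A}
    (h : u' ∈ (M.silentDFA q B).accepts) :
    ∃ u : List A, q ∈ M.toNFA.eval u ∧ ∀ a ∉ B, u.count a = u'.count a :=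
  let ⟨u, hu, hq⟩ := exists_mem_evalFrom_of_mem_silentDFA_evalFrom h
  ⟨u, hq, hu⟩

end SilentDFA

section Component

variable (M : BuchiAutomaton A) (q : M.Q) (B : Finset A)

/-- `none` is a sink, `some (.inl S)` runs `silentDFA` on a prefix over the complement of `B`,
and `some (.inr r)` expects the letter at position `r` of the period `B.toList`. -/
abbrev ComponentState : Type := Option (Set M.Q ⊕ Fin B.toList.length)

noncomputable def cycleStep (r : Fin B.toList.length) (a : A) : M.ComponentState B :=
  if a = B.toList[r.1] then some (.inr ⟨(r + 1) % B.toList.length, Nat.mod_lt _ r.pos⟩)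
  else none

noncomputable def componentStep : M.ComponentState B → A → M.ComponentState B
  | some (.inl S), a =>
    if ha : a ∈ B then
      if S ∈ (M.silentDFA q B).accept then
        M.cycleStep B ⟨0, List.length_pos_of_mem (Finset.mem_toList.2 ha)⟩ a
      else none
    else some (.inl ((M.silentDFA q B).step S a))
  | some (.inr r), a => M.cycleStep B r a
  | none, _ => none

noncomputable def component : DetBuchiAutomaton A where
  Q := M.ComponentState B
  fin := inferInstance
  init := some (.inl (M.silentDFA q B).start)
  step := M.componentStep q B
  accept := {s | ∃ r, s = some (.inr r)}

variable {M q B}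

theorem eq_getElem_of_cycleStep_ne_none {r : Fin B.toList.length} {a : A}
    (h : M.cycleStep B r a ≠ none) :
    a = B.toList[r.1] := by
  by_contra ha
  exact h (if_neg ha)

theorem componentStep_eq_inl_iff {s : M.ComponentState B} {a : A} {S : Set M.Q} :
    M.componentStep q B s a = some (.inl S) ↔
      ∃ S₀, s = some (.inl S₀) ∧ a ∉ B ∧ S = (M.silentDFA q B).step S₀ a := by
  constructor
  · intro h
    rcases s with _ | S₀ | r
    · cases h
    · by_cases ha : a ∈ B
      · simp [componentStep, ha, cycleStep] at h
      · simp only [componentStep, dif_neg ha, Option.some.injEq, Sum.inl.injEq] at h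
        exact ⟨S₀, rfl, ha, h.symm⟩
    · simp [componentStep, cycleStep] at h
  · rintro ⟨S₀, rfl, ha, rfl⟩
    exact dif_neg ha

theorem component_run_eq_inl {w : ℕ → A} {n : ℕ} (hw : ∀ i < n, w i ∉ B) :
    (M.component q B).run w n = some (.inl ((M.silentDFA q B).eval ((List.range n).map w))) := by
  induction n with
  | zero => rfl
  | succ n ih =>
    rw [DetBuchiAutomaton.run, ih fun i hi => hw i (by omega), List.range_succ, List.map_append,
      List.map_singleton, DFA.eval_append_singleton]
    exact dif_neg (hw n (by omega))

theorem not_mem_of_component_run_eq_inl {w : ℕ → A} {n : ℕ} {S : Set M.Q}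
    (h : (M.component q B).run w n = some (.inl S)) : ∀ i < n, w i ∉ B := by
  induction n generalizing S with
  | zero => intro i hi; omega
  | succ n ih =>
    obtain ⟨S₀, hS₀, hn, -⟩ := componentStep_eq_inl_iff.1 h
    intro i hi
    rcases Nat.lt_succ_iff_lt_or_eq.1 hi with hi | rfl
    · exact ih hS₀ i hi
    · exact hn

theorem componentStep_inl_of_mem {S : Set M.Q} {a : A} (ha : a ∈ B)
    (hS : S ∈ (M.silentDFA q B).accept) :
    M.componentStep q B (some (.inl S)) a =
      M.cycleStep B ⟨0, List.length_pos_of_mem (Finset.mem_toList.2 ha)⟩ a := by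
  simp [componentStep, ha, hS]

theorem mem_of_componentStep_inl_eq_inr {S : Set M.Q} {a : A} {r : Fin B.toList.length}
    (h : M.componentStep q B (some (.inl S)) a = some (.inr r)) :
    a ∈ B ∧ S ∈ (M.silentDFA q B).accept := by
  by_cases ha : a ∈ B
  · by_cases hS : S ∈ (M.silentDFA q B).accept
    · exact ⟨ha, hS⟩
    · simp [componentStep, ha, hS] at h
  · simp [componentStep, ha] at h

theorem component_run_cycle {w : ℕ → A} {t : ℕ} (hk : 0 < B.toList.length)
    (h₀ : (M.component q B).run w (t + 1) = M.cycleStep B ⟨0, hk⟩ (w t)) (j : ℕ)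
    (hw : ∀ i < j, w (t + i) = B.toList[i % B.toList.length]'(Nat.mod_lt _ hk)) :
    (M.component q B).run w (t + j + 1) =
      M.cycleStep B ⟨j % B.toList.length, Nat.mod_lt _ hk⟩ (w (t + j)) := by
  induction j with
  | zero => simpa [Nat.zero_mod] using h₀
  | succ j ih =>
    change M.componentStep q B ((M.component q B).run w (t + j + 1)) _ = _
    rw [ih fun i hi => hw i (by omega), cycleStep, if_pos (hw j (by omega))]
    exact congrArg (M.cycleStep B · _) (Fin.ext (Nat.mod_add_mod j _ 1))

theorem component_run_ne_none {w : ℕ → A} (hw : w ∈ (M.component q B).lang) (t : ℕ) :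
    (M.component q B).run w t ≠ none := by
  intro ht
  have hdead : ∀ j, (M.component q B).run w (t + j) = none := fun j => by
    induction j with
    | zero => exact ht
    | succ j ih =>
      change M.componentStep q B ((M.component q B).run w (t + j)) (w (t + j)) = none
      rw [ih]
      rfl
  obtain ⟨m, hm, r, hr⟩ := frequently_atTop.1 hw t
  obtain ⟨j, rfl⟩ := Nat.exists_eq_add_of_le hm
  cases (hdead j).symm.trans hr

theorem exists_mem_accepts_of_mem_component_lang {w : ℕ → A}
    (hw : w ∈ (M.component q B).lang) :
    ∃ u' ∈ (M.silentDFA q B).accepts, parikhInf w = lassoParikh u' B := by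
  have halive := component_run_ne_none hw
  set ρ := (M.component q B).run w
  have hex : ∃ t r, ρ t = some (.inr r) := hw.exists
  obtain ⟨r, hr⟩ := Nat.find_spec hex
  -- the run enters the periodic part at time `t₀ + 1`
  obtain ⟨t₀, ht₀⟩ : ∃ t₀, Nat.find hex = t₀ + 1 :=
    Nat.exists_eq_add_one_of_ne_zero fun h0 => by
      rw [h0] at hr
      cases hr
  rw [ht₀] at hr
  obtain ⟨S, hS⟩ : ∃ S, ρ t₀ = some (.inl S) := by
    rcases hs : ρ t₀ with _ | S | r'
    · exact absurd hs (halive t₀)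
    · exact ⟨S, rfl⟩
    · exact absurd ⟨r', hs⟩ (Nat.find_min hex (by omega))
  have hSeval : S = (M.silentDFA q B).eval ((List.range t₀).map w) :=
    Sum.inl.inj (Option.some.inj (hS.symm.trans
      (component_run_eq_inl (M := M) (q := q) (not_mem_of_component_run_eq_inl hS))))
  have hstep : ρ (t₀ + 1) = M.componentStep q B (some (.inl S)) (w t₀) := by
    rw [← hS]
    rfl
  obtain ⟨ha, hSacc⟩ := mem_of_componentStep_inl_eq_inr (hstep ▸ hr)
  have hk : 0 < B.toList.length := List.length_pos_of_mem (Finset.mem_toList.2 ha)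
  have hletters : ∀ j, w (t₀ + j) = B.toList[j % B.toList.length]'(Nat.mod_lt _ hk) := by
    intro j
    induction j using Nat.strong_induction_on with
    | _ j ih =>
      have := component_run_cycle hk (hstep.trans (componentStep_inl_of_mem ha hSacc)) j ih
      exact eq_getElem_of_cycleStep_ne_none fun h => halive _ (this.trans h)
  refine ⟨(List.range t₀).map w, by rw [DFA.mem_accepts, ← hSeval]; exact hSacc, ?_⟩
  have := parikhInf_of_periodic (List.ne_nil_of_length_pos hk) hletters
  rwa [Finset.toList_toFinset] at this

theorem append_cycle_mem_component_lang {u' : List A} (hu' : ∀ a ∈ u', a ∉ B)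
    (hacc : u' ∈ (M.silentDFA q B).accepts) (hB : B.toList ≠ []) :
    u' ++ₛ Stream'.cycle B.toList hB ∈ (M.component q B).lang := by
  set w := (u' ++ₛ Stream'.cycle B.toList hB).get
  have hk : 0 < B.toList.length := List.length_pos_iff.2 hB
  have hperiod : ∀ j, w (u'.length + j) = B.toList[j % B.toList.length]'(Nat.mod_lt _ hk) :=
    fun j => (Stream'.get_append_right j u' _).trans (Stream'.get_cycle _ hB j)
  have hpre : (M.component q B).run w u'.length = some (.inl ((M.silentDFA q B).eval u')) := by
    have := component_run_eq_inl (M := M) (q := q) (n := u'.length) (w := w) fun i hi => by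
      rw [show w i = u'[i] from Stream'.get_append_left i u' _ hi]
      exact hu' _ (List.getElem_mem hi)
    rwa [map_range_append_stream] at this
  have ha : w u'.length ∈ B := by
    rw [← add_zero u'.length, hperiod 0]
    exact Finset.mem_toList.1 (List.getElem_mem _)
  have hentry :
      (M.component q B).run w (u'.length + 1) = M.cycleStep B ⟨0, hk⟩ (w u'.length) := by
    change M.componentStep q B ((M.component q B).run w u'.length) _ = _
    rw [hpre, componentStep_inl_of_mem (S := (M.silentDFA q B).eval u') ha hacc]
  show ∃ᶠ t in atTop, (M.component q B).run w t ∈ _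
  refine frequently_atTop.2 fun N => ⟨u'.length + N + 1, by omega, ?_⟩
  rw [component_run_cycle hk hentry N fun i _ => hperiod i, hperiod N]
  exact ⟨_, if_pos rfl⟩

end Component

noncomputable def jumpDet [Fintype A] (M : BuchiAutomaton A) : DetBuchiAutomaton A :=
  DetBuchiAutomaton.pi fun x : {x : M.Q × Finset A // M.IsCycleAlphabet x.1 x.2} =>
    M.component x.1.1 x.1.2

def lassoParikhs (M : BuchiAutomaton A) : Set (A → ℕ∞) :=
  {p | ∃ q B u, M.IsCycleAlphabet q B ∧ q ∈ M.toNFA.eval u ∧ p = lassoParikh u B}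

theorem parikhInf_image_lang [Fintype A] (M : BuchiAutomaton A) :
    parikhInf '' M.lang = M.lassoParikhs := by
  ext p
  constructor
  · rintro ⟨w, hw, rfl⟩
    exact exists_lasso_of_mem_lang hw
  · rintro ⟨q, B, u, ⟨hq, v, hv, rfl, hcyc⟩, hu, rfl⟩
    exact ⟨_, append_cycle_mem_lang hv hq hu hcyc, parikhInf_append_cycle u v hv⟩

theorem parikhInf_image_jumpDet_lang [Fintype A] (M : BuchiAutomaton A) :
    parikhInf '' M.jumpDet.lang = M.lassoParikhs := by
  rw [jumpDet, DetBuchiAutomaton.lang_pi]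
  ext p
  constructor
  · rintro ⟨w, hw, rfl⟩
    obtain ⟨⟨⟨q, B⟩, hqB⟩, hw⟩ := Set.mem_iUnion.1 hw
    obtain ⟨u', hu', hp⟩ := exists_mem_accepts_of_mem_component_lang hw
    obtain ⟨u, hu, hcount⟩ := exists_count_eq_of_mem_silentDFA_accepts hu'
    exact ⟨q, B, u, hqB, hu, hp.trans (lassoParikh_congr hcount).symm⟩
  · rintro ⟨q, B, u, hqB, hu, rfl⟩
    have hB : B.toList ≠ [] := by
      obtain ⟨-, v, hv, rfl, -⟩ := hqB
      simpa [Finset.toList_eq_nil, List.toFinset_eq_empty_iff] using hv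
    refine ⟨_, Set.mem_iUnion.2 ⟨⟨(q, B), hqB⟩, append_cycle_mem_component_lang
      (u' := u.filter (· ∉ B)) (fun a ha => by simpa using (List.mem_filter.1 ha).2)
      (filter_mem_silentDFA_accepts hu) hB⟩, ?_⟩
    rw [parikhInf_append_cycle, Finset.toList_toFinset]
    exact lassoParikh_congr fun a ha => List.count_filter (by simpa using ha)

end BuchiAutomaton

theorem jumpLang_eq_preimage_image (M : BuchiAutomaton A) :
    JumpLang M = parikhInf ⁻¹' (parikhInf '' M.lang) := by
  ext w
  simp only [JumpLang, Set.mem_preimage, Set.mem_image, Set.mem_ofPred_eq, and_comm]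

/-- Every jumping language of a Büchi automaton is the jumping language of a
deterministic Büchi automaton. -/
theorem jumpLang_determinizable (A : Type) [Fintype A] (M : BuchiAutomaton A) :
    ∃ D : BuchiAutomaton A, D.Deterministic ∧ JumpLang M = JumpLang D := by
  refine ⟨M.jumpDet.toBuchi, M.jumpDet.toBuchi_deterministic, ?_⟩
  rw [jumpLang_eq_preimage_image, jumpLang_eq_preimage_image, DetBuchiAutomaton.toBuchi_lang,
    M.parikhInf_image_lang, M.parikhInf_image_jumpDet_lang]
end

section
/- Let ∪_m (S_m + m) be an oblivious masked union over a finite alphabet Σ, i.e., for every mask m the set S_m ⊆ ℕ^Σ is m-oblivious. Then 𝕄^Σ ∖ ∪_m (S_m + m) = ∪_m ((ℕ^Σ ∖ S_m) + m), where both unions range over all masks m of Σ. -/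
open scoped Classical

/-! Every `v ∈ 𝕄^Σ` is `x + m` for exactly one mask `m`, namely the one marking the `∞`
coordinates of `v`, so the sets `ℕ^Σ + m` partition `𝕄^Σ`. Within the block of `m`,
obliviousness of `S_m` makes `x + m ∈ S_m + m` equivalent to `x ∈ S_m`, so complementing
blockwise complements the union. -/

section Masks

variable {A : Type}

theorem maskAdd_eq_top_iff (x : A → ℕ) (m : A → ℕ∞) (a : A) :
    maskAdd x m a = ⊤ ↔ m a = ⊤ := by
  simp [maskAdd, ENat.add_eq_top]

theorem IsMask.maskAdd_mem_mVecs {m : A → ℕ∞} (hm : IsMask m) (x : A → ℕ) :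
    maskAdd x m ∈ MVecs A :=
  let ⟨a, ha⟩ := hm.2
  ⟨a, (maskAdd_eq_top_iff x m a).2 ha⟩

theorem IsMask.eq_of_maskAdd_eq {m m' : A → ℕ∞} (hm : IsMask m) (hm' : IsMask m')
    {x y : A → ℕ} (h : maskAdd x m = maskAdd y m') : m = m' := by
  funext a
  have htop : m a = ⊤ ↔ m' a = ⊤ := by
    rw [← maskAdd_eq_top_iff x m, ← maskAdd_eq_top_iff y m', h]
  rcases hm.1 a with h0 | h0 <;> rcases hm'.1 a with h0' | h0' <;> simp_all

noncomputable def maskOf (v : A → ℕ∞) : A → ℕ∞ := fun a => if v a = ⊤ then ⊤ else 0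

theorem isMask_maskOf {v : A → ℕ∞} (hv : v ∈ MVecs A) : IsMask (maskOf v) := by
  obtain ⟨a, ha⟩ := hv
  refine ⟨fun b => ?_, a, by simp [maskOf, ha]⟩
  by_cases hb : v b = ⊤ <;> simp [maskOf, hb]

theorem maskAdd_toNat_maskOf (v : A → ℕ∞) : maskAdd (fun a => (v a).toNat) (maskOf v) = v := by
  funext a
  by_cases ha : v a = ⊤
  · simp [maskAdd, maskOf, ha]
  · simp [maskAdd, maskOf, ha, ENat.natCast_toNat ha]

theorem MOblivious.maskAdd_mem_maskAddSet_iff {m : A → ℕ∞} {R : Set (A → ℕ)}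
    (hR : MOblivious m R) (x : A → ℕ) : maskAdd x m ∈ maskAddSet R m ↔ x ∈ R :=
  ⟨fun ⟨y, hy, hyx⟩ => (hR y x hyx).1 hy, Set.mem_image_of_mem _⟩

end Masks

theorem oblivious_masked_compl_general (A : Type)
    (S : (A → ℕ∞) → Set (A → ℕ)) (hS : ∀ m, IsMask m → MOblivious m (S m)) :
    MVecs A \ (⋃ m ∈ {m' : A → ℕ∞ | IsMask m'}, maskAddSet (S m) m) =
      ⋃ m ∈ {m' : A → ℕ∞ | IsMask m'}, maskAddSet ((Set.univ : Set (A → ℕ)) \ S m) m := by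
  ext v
  simp only [Set.mem_sdiff, Set.mem_iUnion, Set.mem_ofPred_eq, exists_prop, not_exists, not_and]
  constructor
  · rintro ⟨hv, hvS⟩
    have hm := isMask_maskOf hv
    refine ⟨maskOf v, hm, _, ⟨Set.mem_univ _, fun hx => ?_⟩, maskAdd_toNat_maskOf v⟩
    exact hvS _ hm ⟨_, hx, maskAdd_toNat_maskOf v⟩
  · rintro ⟨m, hm, x, ⟨-, hx⟩, rfl⟩
    refine ⟨hm.maskAdd_mem_mVecs x, fun m' hm' hxm' => hx ?_⟩
    obtain rfl : m' = m := by
      obtain ⟨y, -, hy⟩ := hxm'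
      exact hm'.eq_of_maskAdd_eq hm hy
    exact ((hS m' hm').maskAdd_mem_maskAddSet_iff x).1 hxm'

/-- The complement (within `𝕄^Σ`) of an oblivious masked union is obtained by
complementing componentwise, mask by mask. -/
theorem oblivious_masked_compl (A : Type) [Fintype A]
    (S : (A → ℕ∞) → Set (A → ℕ)) (hS : ∀ m, IsMask m → MOblivious m (S m)) :
    MVecs A \ (⋃ m ∈ {m' : A → ℕ∞ | IsMask m'}, maskAddSet (S m) m) =
      ⋃ m ∈ {m' : A → ℕ∞ | IsMask m'}, maskAddSet ((Set.univ : Set (A → ℕ)) \ S m) m :=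
  oblivious_masked_compl_general A S hS
end

section
/- Let A be the Büchi automaton over Σ = {a,b,c} with states {q₀,q₁,q₂}, initial state q₀, accepting set {q₂}, and transitions δ(q₀,a) = {q₁}, δ(q₁,b) = {q₀}, δ(q₀,c) = {q₂}, δ(q₂,c) = {q₂}, with all other δ-values empty. Then J(A) = {u·c^ω : u ∈ {a,b,c}^* and the number of occurrences of a in u equals the number of occurrences of b in u}, and this language is not ω-regular: there is no Büchi automaton B with L(B) = J(A). -/
open scoped Classical

/-- The Büchi automaton of Statement 19 over `Σ = {a,b,c}` (`a = 0`, `b = 1`, `c = 2`), with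
`L(A) = (ab)^* c^ω`. -/
def A19 : BuchiAutomaton (Fin 3) where
  Q := Fin 3
  fin := inferInstance
  step q a :=
    if q = 0 ∧ a = 0 then {1}
    else if q = 1 ∧ a = 1 then {0}
    else if q = 0 ∧ a = 2 then {2}
    else if q = 2 ∧ a = 2 then {2}
    else ∅
  init := {0}
  accept := {2}

/-!
A run of `A19` from `q₀` reads `ab` until it reads `c`, and then it sits in `q₂` reading `c`
forever, so `L(A19) = (ab)^* c^ω`. A word with the Parikh image `(n, n, ∞)` of `(ab)^n c^ω` has
only finitely many `a`s and `b`s, hence is `u c^ω` with `|u|_a = |u|_b = n`.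

If a Büchi automaton with `k` states accepted `J(A19)`, its run on `a^k b^k c^ω` would repeat a
state while still reading `a`s; repeating that loop once more gives an accepted word
`a^(k+d) b^k c^ω` with `d > 0`, which is not in `J(A19)`.
-/

section Words

variable {α : Type}

def padWord (u : List α) (c : α) : ℕ → α := fun i => u.getD i c

@[simp] lemma padWord_nil (c : α) (i : ℕ) : padWord [] c i = c := rfl

@[simp] lemma padWord_cons_zero (a : α) (u : List α) (c : α) : padWord (a :: u) c 0 = a := rfl

@[simp] lemma padWord_cons_succ (a : α) (u : List α) (c : α) (i : ℕ) :
    padWord (a :: u) c (i + 1) = padWord u c i := rfl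

lemma padWord_apply (u : List α) (c : α) (i : ℕ) :
    padWord u c i = if h : i < u.length then u.get ⟨i, h⟩ else c := by
  split_ifs with h
  · exact List.getD_eq_getElem u c h
  · exact List.getD_eq_default u c (not_lt.mp h)

lemma padWord_replicate_append (p : ℕ) (a : α) (v : List α) (c : α) (k : ℕ) :
    padWord (List.replicate p a ++ v) c k = if k < p then a else padWord v c (k - p) := by
  unfold padWord
  split_ifs with h
  · rw [List.getD_append _ _ _ _ (by simpa), List.getD_replicate _ h]
  · rw [List.getD_append_right _ _ _ _ (by simpa using h), List.length_replicate]

lemma exists_eq_padWord_of_parikhInf_ne_top [Finite α] {w : ℕ → α} {c : α}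
    (h : ∀ x ≠ c, parikhInf w x ≠ ⊤) : ∃ u, w = padWord u c := by
  have hfin : {i | w i ≠ c}.Finite := by
    have : {i | w i ≠ c} = ⋃ x ∈ {x | x ≠ c}, {i | w i = x} := by ext; simp
    rw [this]
    exact (Set.toFinite _).biUnion fun x hx => Set.encard_ne_top_iff.mp (h x hx)
  obtain ⟨N, hN⟩ := hfin.bddAbove
  refine ⟨List.ofFn fun i : Fin (N + 1) => w i, funext fun i => ?_⟩
  rw [padWord_apply]
  split_ifs with hi
  · simp only [List.get_ofFn]
    rfl
  · by_contra hne
    exact hi (by simpa using Nat.lt_succ_of_le (hN hne))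

/-- `w` with its factor `w[i, j)` read twice in a row. -/
def pumpWord (w : ℕ → α) (i j : ℕ) : ℕ → α :=
  fun k => if k < j then w k else w (k - (j - i))

lemma pumpWord_padWord_replicate_append {p i j : ℕ} (hij : i ≤ j) (hjp : j ≤ p) (a : α)
    (v : List α) (c : α) :
    pumpWord (padWord (List.replicate p a ++ v) c) i j =
      padWord (List.replicate (p + (j - i)) a ++ v) c := by
  funext k
  simp only [pumpWord, padWord_replicate_append]
  split_ifs <;> first | rfl | omega | (congr 1; omega)

variable [DecidableEq α]

lemma encard_padWord_eq_count (u : List α) {c x : α} (hx : x ≠ c) :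
    {i | padWord u c i = x}.encard = u.count x := by
  induction u with
  | nil => simp [hx.symm]
  | cons a u ih =>
    have hsplit : {i | padWord (a :: u) c i = x} =
        (if a = x then {0} else ∅) ∪ Nat.succ '' {i | padWord u c i = x} := by
      ext (_ | i) <;> split_ifs <;> simp_all
    have hdisj : Disjoint (if a = x then ({0} : Set ℕ) else ∅)
        (Nat.succ '' {i | padWord u c i = x}) := by
      split_ifs <;> simp
    rw [hsplit, Set.encard_union_eq hdisj, Nat.succ_injective.encard_image, ih, List.count_cons]
    split_ifs <;> simp_all [add_comm]

lemma parikhInf_padWord (u : List α) (c x : α) :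
    parikhInf (padWord u c) x = if x = c then ⊤ else (u.count x : ℕ∞) := by
  split_ifs with hx
  · subst hx
    refine Set.Infinite.encard_eq ((Set.Ici_infinite u.length).mono fun i hi => ?_)
    exact List.getD_eq_default u x hi
  · exact encard_padWord_eq_count u hx

lemma count_eq_of_padWord_eq {u v : List α} {c x : α} (h : padWord u c = padWord v c)
    (hx : x ≠ c) : u.count x = v.count x := by
  have := congrFun (congrArg parikhInf h) x
  simpa [parikhInf_padWord, hx] using this

end Words

namespace BuchiAutomaton

variable {A : Type} (M : BuchiAutomaton A)

def IsRunFrom (q : M.Q) (w : ℕ → A) (ρ : ℕ → M.Q) : Prop :=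
  ρ 0 = q ∧ ∀ i, ρ (i + 1) ∈ M.step (ρ i) (w i)

def AcceptsFrom (q : M.Q) (w : ℕ → A) : Prop :=
  ∃ ρ, M.IsRunFrom q w ρ ∧ ∀ n, ∃ m, n ≤ m ∧ ρ m ∈ M.accept

variable {M}

lemma IsRunFrom.tail {q : M.Q} {w : ℕ → A} {ρ : ℕ → M.Q} (h : M.IsRunFrom q w ρ) :
    M.IsRunFrom (ρ 1) (fun i => w (i + 1)) (fun i => ρ (i + 1)) :=
  ⟨rfl, fun i => h.2 (i + 1)⟩

lemma AcceptsFrom.of_step {q p : M.Q} {w : ℕ → A} (hp : p ∈ M.step q (w 0))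
    (h : M.AcceptsFrom p fun i => w (i + 1)) : M.AcceptsFrom q w := by
  obtain ⟨ρ, ⟨hρ0, hρ⟩, hacc⟩ := h
  refine ⟨fun | 0 => q | i + 1 => ρ i, ⟨rfl, ?_⟩, fun n => ?_⟩
  · rintro (_ | i)
    · show ρ 0 ∈ _
      rwa [hρ0]
    · exact hρ i
  · obtain ⟨m, hnm, hm⟩ := hacc n
    exact ⟨m + 1, by omega, hm⟩

lemma mem_lang_of_acceptsFrom {q : M.Q} {w : ℕ → A} (hq : q ∈ M.init)
    (h : M.AcceptsFrom q w) :
    w ∈ M.lang := by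
  obtain ⟨ρ, ⟨rfl, hρ⟩, hacc⟩ := h
  exact ⟨ρ, ⟨hq, hρ⟩, hacc⟩

lemma pumpWord_mem_lang {w : ℕ → A} {ρ : ℕ → M.Q} (hρ : M.IsRun w ρ)
    (hacc : ∀ n, ∃ m, n ≤ m ∧ ρ m ∈ M.accept) {i j : ℕ} (hij : i < j)
    (hρij : ρ i = ρ j) :
    pumpWord w i j ∈ M.lang := by
  refine ⟨fun k => if k < j then ρ k else ρ (k - (j - i)), ⟨?_, fun k => ?_⟩, fun n => ?_⟩
  · simpa [hij.ne_bot] using hρ.1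
  · simp only [pumpWord]
    rcases lt_trichotomy (k + 1) j with hk | hk | hk
    · simpa [hk, (Nat.lt_succ_self k).trans hk] using hρ.2 k
    · subst hk
      simpa [Nat.sub_sub_self hij.le, hρij] using hρ.2 k
    · have hshift : k + 1 - (j - i) = k - (j - i) + 1 := by omega
      simpa [show ¬ k + 1 < j by omega, show ¬ k < j by omega, hshift] using hρ.2 (k - (j - i))
  · obtain ⟨m, hnm, hm⟩ := hacc (n + j)
    exact ⟨m + (j - i), by omega, by simpa [show ¬ m + (j - i) < j by omega] using hm⟩

lemma exists_pumpWord_mem_lang {w : ℕ → A} (hw : w ∈ M.lang) :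
    ∃ i j, i < j ∧ j ≤ Fintype.card M.Q ∧ pumpWord w i j ∈ M.lang := by
  obtain ⟨ρ, hρ, hacc⟩ := hw
  obtain ⟨a, b, hab, hρab⟩ := Fintype.exists_ne_map_eq_of_card_lt
    (fun k : Fin (Fintype.card M.Q + 1) => ρ k) (by simp)
  rcases lt_or_gt_of_ne hab with h | h
  · exact ⟨a, b, h, by omega, pumpWord_mem_lang hρ hacc h hρab⟩
  · exact ⟨b, a, h, by omega, pumpWord_mem_lang hρ hacc h hρab.symm⟩

end BuchiAutomaton

lemma A19_step_zero (x p : Fin 3) :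
    p ∈ A19.step (0 : Fin 3) x ↔ (x = 0 ∧ p = 1) ∨ (x = 2 ∧ p = 2) := by
  fin_cases x <;> simp [A19] <;> first | exact Iff.rfl | exact fun h => h

lemma A19_step_one (x p : Fin 3) : p ∈ A19.step (1 : Fin 3) x ↔ x = 1 ∧ p = 0 := by
  fin_cases x <;> simp [A19] <;> first | exact Iff.rfl | exact fun h => h

lemma A19_step_two (x p : Fin 3) : p ∈ A19.step (2 : Fin 3) x ↔ x = 2 ∧ p = 2 := by
  fin_cases x <;> simp [A19] <;> first | exact Iff.rfl | exact fun h => h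

def abPow : ℕ → List (Fin 3)
  | 0 => []
  | n + 1 => 0 :: 1 :: abPow n

@[simp] lemma count_abPow_zero (n : ℕ) : (abPow n).count 0 = n := by
  induction n <;> simp_all [abPow]

@[simp] lemma count_abPow_one (n : ℕ) : (abPow n).count 1 = n := by
  induction n <;> simp_all [abPow]

lemma A19_acceptsFrom_zero_padWord_abPow (n : ℕ) :
    A19.AcceptsFrom (0 : Fin 3) (padWord (abPow n) 2) := by
  induction n with
  | zero =>
    refine .of_step (p := (2 : Fin 3)) ((A19_step_zero _ _).mpr (.inr ⟨rfl, rfl⟩)) ?_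
    exact ⟨fun _ => (2 : Fin 3), ⟨rfl, fun _ => (A19_step_two _ _).mpr ⟨rfl, rfl⟩⟩,
      fun n => ⟨n, le_rfl, rfl⟩⟩
  | succ n ih =>
    refine .of_step (p := (1 : Fin 3)) ((A19_step_zero _ _).mpr (.inl ⟨rfl, rfl⟩)) ?_
    exact .of_step (p := (0 : Fin 3)) ((A19_step_one _ _).mpr ⟨rfl, rfl⟩) ih

lemma A19_isRunFrom_two {w ρ : ℕ → Fin 3} (hρ : A19.IsRunFrom (2 : Fin 3) w ρ) (i : ℕ) :
    ρ i = 2 ∧ w i = 2 := by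
  induction i with
  | zero => exact ⟨hρ.1, ((A19_step_two _ _).mp (hρ.1 ▸ hρ.2 0)).1⟩
  | succ i ih =>
    have hi1 := ((A19_step_two _ _).mp (ih.1 ▸ hρ.2 i)).2
    exact ⟨hi1, ((A19_step_two _ _).mp (hi1 ▸ hρ.2 (i + 1))).1⟩

lemma A19_eq_padWord_abPow_of_isRunFrom_zero {w ρ : ℕ → Fin 3}
    (hρ : A19.IsRunFrom (0 : Fin 3) w ρ) {N : ℕ} (hN : ρ N = 2) :
    ∃ n, w = padWord (abPow n) 2 := by
  induction N using Nat.strong_induction_on generalizing w ρ with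
  | _ N ih =>
    rcases (A19_step_zero _ _).mp (hρ.1 ▸ hρ.2 0) with ⟨hw0, hρ1⟩ | ⟨hw0, hρ1⟩
    · obtain ⟨hw1, hρ2⟩ := (A19_step_one _ _).mp (hρ1 ▸ hρ.2 1)
      have hN2 : 2 ≤ N := by
        by_contra! h
        interval_cases N
        · exact absurd (show (0 : Fin 3) = 2 from hρ.1.symm.trans hN) (by decide)
        · exact absurd (show (1 : Fin 3) = 2 from hρ1.symm.trans hN) (by decide)
      obtain ⟨n, hn⟩ := ih (N - 2) (by omega) (w := fun i => w (i + 2))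
        (ρ := fun i => ρ (i + 2)) ⟨hρ2, fun i => hρ.2 (i + 2)⟩
        (by rwa [Nat.sub_add_cancel hN2])
      exact ⟨n + 1, funext fun | 0 => hw0 | 1 => hw1 | i + 2 => congrFun hn i⟩
    · have htail := A19_isRunFrom_two (hρ1 ▸ hρ.tail)
      exact ⟨0, funext fun | 0 => hw0 | i + 1 => (htail i).2⟩

lemma A19_lang_eq : A19.lang = Set.range fun n => padWord (abPow n) 2 := by
  ext w
  constructor
  · rintro ⟨ρ, ⟨hρ0, hρ⟩, hacc⟩
    obtain ⟨N, -, hN⟩ := hacc 0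
    exact (A19_eq_padWord_abPow_of_isRunFrom_zero (ρ := ρ) ⟨hρ0, hρ⟩ hN).imp
      fun _ => Eq.symm
  · rintro ⟨n, rfl⟩
    exact BuchiAutomaton.mem_lang_of_acceptsFrom rfl (A19_acceptsFrom_zero_padWord_abPow n)

lemma mem_jumpLang_A19_iff {w : ℕ → Fin 3} :
    w ∈ JumpLang A19 ↔ ∃ u : List (Fin 3), u.count 0 = u.count 1 ∧ w = padWord u 2 := by
  simp only [JumpLang, A19_lang_eq, Set.mem_ofPred_eq, Set.mem_range]
  constructor
  · rintro ⟨_, hΨ, n, rfl⟩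
    have hΨw : ∀ x, parikhInf w x = parikhInf (padWord (abPow n) 2) x :=
      fun x => (congrFun hΨ x).symm
    obtain ⟨u, rfl⟩ := exists_eq_padWord_of_parikhInf_ne_top (w := w) (c := 2) fun x hx => by
      simp [hΨw, parikhInf_padWord, hx]
    have h0 := hΨw 0
    have h1 := hΨw 1
    simp only [parikhInf_padWord, Fin.reduceEq, ↓reduceIte, count_abPow_zero, count_abPow_one,
      Nat.cast_inj] at h0 h1
    exact ⟨u, by rw [h0, h1], rfl⟩
  · rintro ⟨u, hu, rfl⟩
    refine ⟨_, funext fun x => ?_, u.count 0, rfl⟩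
    fin_cases x <;> simp [parikhInf_padWord, hu]

theorem not_exists_lang_eq_jumpLang_A19 :
    ¬ ∃ B : BuchiAutomaton (Fin 3), B.lang = JumpLang A19 := by
  rintro ⟨B, hB⟩
  set p := Fintype.card B.Q
  have hw : padWord (List.replicate p 0 ++ List.replicate p 1) 2 ∈ B.lang :=
    hB ▸ mem_jumpLang_A19_iff.mpr ⟨_, by simp [List.count_replicate], rfl⟩
  obtain ⟨i, j, hij, hjp, hpump⟩ := B.exists_pumpWord_mem_lang hw
  rw [hB, mem_jumpLang_A19_iff, pumpWord_padWord_replicate_append hij.le hjp] at hpump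
  obtain ⟨u, hu, hpu⟩ := hpump
  have h0 := count_eq_of_padWord_eq hpu (x := 0) (by decide)
  have h1 := count_eq_of_padWord_eq hpu (x := 1) (by decide)
  simp only [List.count_append, List.count_replicate_self, List.count_replicate, Fin.reduceBEq,
    Bool.false_eq_true, ↓reduceIte, add_zero, zero_add] at h0 h1
  omega

/-- `J(A) = {u·c^ω : u ∈ Σ^*, #a(u) = #b(u)}`, and this language is not
`ω`-regular. -/
theorem jumpLang_A19_not_omega_regular :
    JumpLang A19 =
      {w : ℕ → Fin 3 | ∃ u : List (Fin 3), u.count 0 = u.count 1 ∧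
        ∀ i : ℕ, w i = if h : i < u.length then u.get ⟨i, h⟩ else 2} ∧
    ¬ ∃ B : BuchiAutomaton (Fin 3), B.lang = JumpLang A19 := by
  refine ⟨Set.ext fun w => ?_, not_exists_lang_eq_jumpLang_A19⟩
  simp only [mem_jumpLang_A19_iff, funext_iff, padWord_apply, Set.mem_ofPred_eq]
end
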